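/- If a finite-dimensional simple Lie superalgebra L over 𝔽 does not possess any nondegenerate associative form, then every homogeneous superderivation ψ : L → L* is skew, i.e. ψ(x)(y) = −(−1)^{p(x)p(y)} ψ(y)(x) for all homogeneous x, y ∈ L, and H²(L, 𝔽) ≅ H¹(L, L*). -/

import Mathlib

/-- The sign `(-1)^a` for a parity `a : ZMod 2`. -/
def sgn (F : Type*) [Ring F] (a : ZMod 2) : F := if a = 0 then 1 else -1

section
variable (F : Type*) [Field F] (L : Type*) [AddCommGroup L] [Module F L]
  (g : ZMod 2 → Submodule F L) (br : L →ₗ[F] L →ₗ[F] L)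

/-- `ψ : L → L*` is a homogeneous superderivation of parity `pψ` into the
coadjoint module `L*` (note `L* = L →ₗ[F] F`, so `ψ` is also a bilinear form). -/
def IsSuperDer (pψ : ZMod 2) (ψ : L →ₗ[F] Module.Dual F L) : Prop :=
  (∀ a : ZMod 2, ∀ x ∈ g a, ∀ y ∈ g (a + pψ + 1), ψ x y = 0) ∧
  (∀ a b : ZMod 2, ∀ x ∈ g a, ∀ y ∈ g b, ∀ z : L,
    ψ (br x y) z
      = sgn F (pψ * a) * (- sgn F (a * (b + pψ)) * ψ y (br x z))
      - sgn F ((pψ + a) * b) * (- sgn F (b * (a + pψ)) * ψ x (br y z)))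

/-- `c` is super-skew: `c(x, y) = -(-1)^{p(x)p(y)} c(y, x)`. -/
def IsSkew (c : L →ₗ[F] L →ₗ[F] F) : Prop :=
  ∀ a b : ZMod 2, ∀ x ∈ g a, ∀ y ∈ g b, c x y = - sgn F (a * b) * c y x

/-- `c` is a scalar 2-cocycle (trivial coefficients):
`(-1)^{p(x)p(z)} c([x,y], z) + (-1)^{p(y)p(x)} c([y,z], x)
  + (-1)^{p(z)p(y)} c([z,x], y) = 0`. -/
def IsCocycle (c : L →ₗ[F] L →ₗ[F] F) : Prop :=
  ∀ a b k : ZMod 2, ∀ x ∈ g a, ∀ y ∈ g b, ∀ z ∈ g k,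
    sgn F (a * k) * c (br x y) z + sgn F (b * a) * c (br y z) x
      + sgn F (k * b) * c (br z x) y = 0

/-- `ψ` is inner; for `c` regarded as a 2-cochain this says `c` is a
2-coboundary `c(x, y) = f([x, y])`. -/
def IsInner (ψ : L →ₗ[F] Module.Dual F L) : Prop :=
  ∃ f : Module.Dual F L, ∀ x y : L, ψ x y = f (br x y)

end

/-! The super-symmetrization `S(x, y) = ψ(x)(y) + (-1)^{p(x)p(y)} ψ(y)(x)` of a superderivation
`ψ : L → L*` is associative, by the Leibniz rule and the super skew-symmetry of the bracket.
The right radical of an associative form is an ideal, so by simplicity `S` is zero or, `L` being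
finite-dimensional, nondegenerate. With no nondegenerate associative form, `S = 0`: `ψ` is skew.
For skew forms, the Leibniz rule and the cocycle identity are rewritings of each other by the
skew-symmetries of the form and of the bracket. -/

theorem ZMod.two_cases (a : ZMod 2) : a = 0 ∨ a = 1 := by
  revert a; decide

section Grading

variable {R L ι : Type*} [Semiring R] [AddCommMonoid L] [Module R L] [DecidableEq ι]
  (g : ι → Submodule R L) [DirectSum.Decomposition g]

noncomputable def gradedProj (i : ι) : L →ₗ[R] L :=
  (g i).subtype ∘ₗ DirectSum.component R ι (fun i => g i) i ∘ₗ
    (DirectSum.decomposeLinearEquiv g).toLinearMap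

theorem gradedProj_of_mem {i : ι} {x : L} (hx : x ∈ g i) (j : ι) :
    gradedProj g j x = if i = j then x else 0 := by
  split_ifs with hij
  · exact hij ▸ DirectSum.decompose_of_mem_same g hx
  · exact DirectSum.decompose_of_mem_ne g hx hij

end Grading

section Radical

variable {R M N : Type*} [CommSemiring R] [AddCommMonoid M] [Module R M]
  [AddCommMonoid N] [Module R N]

theorem bracket_mem_ker_flip_of_assoc {br : M →ₗ[R] M →ₗ[R] M} {B : M →ₗ[R] M →ₗ[R] N}
    (hB : ∀ x y z, B (br x y) z = B x (br y z)) (x : M) {y : M}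
    (hy : y ∈ LinearMap.ker B.flip) : br x y ∈ LinearMap.ker B.flip := by
  rw [LinearMap.mem_ker] at hy ⊢
  ext w
  simp only [LinearMap.flip_apply, LinearMap.zero_apply, ← hB]
  exact LinearMap.congr_fun hy (br w x)

end Radical

theorem eq_zero_or_nondegenerate_of_assoc {F L : Type*} [Field F] [AddCommGroup L] [Module F L]
    [Module.Finite F L] (br : L →ₗ[F] L →ₗ[F] L)
    (hsimple : ∀ I : Submodule F L, (∀ x y : L, y ∈ I → br x y ∈ I) → I = ⊥ ∨ I = ⊤)
    {B : L →ₗ[F] L →ₗ[F] F} (hB : ∀ x y z, B (br x y) z = B x (br y z)) :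
    B = 0 ∨ B.Nondegenerate := by
  rcases hsimple _ (fun x _ => bracket_mem_ker_flip_of_assoc hB x) with hbot | htop
  · right
    have hright : Function.Injective B.flip := LinearMap.ker_eq_bot.mp hbot
    refine ⟨LinearMap.separatingLeft_iff_ker_eq_bot.mpr (LinearMap.ker_eq_bot.mpr ?_),
      LinearMap.separatingRight_iff_flip_ker_eq_bot.mpr hbot⟩
    exact (LinearMap.injective_iff_surjective_of_finrank_eq_finrank
      Subspace.dual_finrank_eq.symm).mpr (LinearMap.flip_injective_iff₁.mp hright)
  · left
    ext x y
    exact LinearMap.congr_fun₂ (LinearMap.ker_eq_top.mp htop) y x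

section SuperDerivations

variable {F L : Type*} [Field F] [AddCommGroup L] [Module F L]
  {g : ZMod 2 → Submodule F L} {br : L →ₗ[F] L →ₗ[F] L}

theorem isSuperDer_iff {pψ : ZMod 2} {ψ : L →ₗ[F] L →ₗ[F] F} :
    IsSuperDer F L g br pψ ψ ↔
      (∀ a : ZMod 2, ∀ x ∈ g a, ∀ y ∈ g (a + pψ + 1), ψ x y = 0) ∧
      ∀ a b : ZMod 2, ∀ x ∈ g a, ∀ y ∈ g b, ∀ z : L,
        ψ (br x y) z = ψ x (br y z) - sgn F (a * b) * ψ y (br x z) := by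
  refine and_congr_right fun _ => forall₂_congr fun a b => forall₂_congr fun x _ =>
    forall₂_congr fun y _ => forall_congr' fun z => ?_
  refine Eq.congr_right ?_
  rcases ZMod.two_cases a with rfl | rfl <;> rcases ZMod.two_cases b with rfl | rfl <;>
    rcases ZMod.two_cases pψ with rfl | rfl <;> simp +decide [sgn] <;> ring

theorem IsSuperDer.apply_bracket {pψ : ZMod 2} {ψ : L →ₗ[F] L →ₗ[F] F}
    (h : IsSuperDer F L g br pψ ψ) {a b : ZMod 2} {x y : L} (hx : x ∈ g a) (hy : y ∈ g b)
    (z : L) : ψ (br x y) z = ψ x (br y z) - sgn F (a * b) * ψ y (br x z) :=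
  (isSuperDer_iff.mp h).2 a b x hx y hy z

theorem IsSuperDer.isCocycle_of_isSkew
    (hbrg : ∀ a b : ZMod 2, ∀ x ∈ g a, ∀ y ∈ g b, br x y ∈ g (a + b))
    (hskew : ∀ a b : ZMod 2, ∀ x ∈ g a, ∀ y ∈ g b, br x y = - sgn F (a * b) • br y x)
    {pψ : ZMod 2} {ψ : L →ₗ[F] L →ₗ[F] F} (h : IsSuperDer F L g br pψ ψ)
    (hψ : IsSkew F L g ψ) : IsCocycle F L g br ψ := by
  intro a b k x hx y hy z hz
  rw [h.apply_bracket hx hy, hψ a (b + k) x hx _ (hbrg b k y hy z hz),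
    hψ b (a + k) y hy _ (hbrg a k x hx z hz), hskew a k x hx z hz]
  simp only [map_smul, LinearMap.smul_apply, smul_eq_mul]
  rcases ZMod.two_cases a with rfl | rfl <;> rcases ZMod.two_cases b with rfl | rfl <;>
    rcases ZMod.two_cases k with rfl | rfl <;> simp +decide [sgn] <;> ring

theorem IsSkew.apply_bracket_of_isCocycle
    (hbrg : ∀ a b : ZMod 2, ∀ x ∈ g a, ∀ y ∈ g b, br x y ∈ g (a + b))
    (hskew : ∀ a b : ZMod 2, ∀ x ∈ g a, ∀ y ∈ g b, br x y = - sgn F (a * b) • br y x)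
    {c : L →ₗ[F] L →ₗ[F] F} (hc : IsSkew F L g c) (hcoc : IsCocycle F L g br c)
    {a b k : ZMod 2} {x y z : L} (hx : x ∈ g a) (hy : y ∈ g b) (hz : z ∈ g k) :
    c (br x y) z = c x (br y z) - sgn F (a * b) * c y (br x z) := by
  have h := hcoc a b k x hx y hy z hz
  rw [hc (b + k) a _ (hbrg b k y hy z hz) x hx, hc (k + a) b _ (hbrg k a z hz x hx) y hy,
    hskew k a z hz x hx] at h
  simp only [map_smul, smul_eq_mul] at h
  rcases ZMod.two_cases a with rfl | rfl <;> rcases ZMod.two_cases b with rfl | rfl <;>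
    rcases ZMod.two_cases k with rfl | rfl <;> simp +decide [sgn] at h ⊢ <;>
    first | linear_combination h | linear_combination -h

end SuperDerivations

section SuperForms

variable {F L : Type*} [Field F] [AddCommGroup L] [Module F L]
  (g : ZMod 2 → Submodule F L) [DirectSum.Decomposition g]

/-- `(x, y) ↦ ψ x y + (-1)^{p(x)p(y)} ψ y x`: the sign differs from `1` only when both
arguments are odd, which the last term corrects. -/
noncomputable def superSymm (ψ : L →ₗ[F] L →ₗ[F] F) : L →ₗ[F] L →ₗ[F] F :=
  ψ + ψ.flip - (2 : F) • (ψ.compl₁₂ (gradedProj g 1) (gradedProj g 1)).flip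

variable {g}

theorem superSymm_apply_of_mem (ψ : L →ₗ[F] L →ₗ[F] F) {a b : ZMod 2} {x y : L}
    (hx : x ∈ g a) (hy : y ∈ g b) :
    superSymm g ψ x y = ψ x y + sgn F (a * b) * ψ y x := by
  simp only [superSymm, LinearMap.sub_apply, LinearMap.add_apply, LinearMap.smul_apply,
    LinearMap.flip_apply, LinearMap.compl₁₂_apply, smul_eq_mul, gradedProj_of_mem g hx,
    gradedProj_of_mem g hy]
  rcases ZMod.two_cases a with rfl | rfl <;> rcases ZMod.two_cases b with rfl | rfl <;>
    simp +decide [sgn]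
  ring

theorem isSkew_of_superSymm_eq_zero {ψ : L →ₗ[F] L →ₗ[F] F} (h : superSymm g ψ = 0) :
    IsSkew F L g ψ := by
  intro a b x hx y hy
  have := LinearMap.congr_fun₂ h x y
  rw [superSymm_apply_of_mem ψ hx hy, LinearMap.zero_apply, LinearMap.zero_apply] at this
  linear_combination this

variable {br : L →ₗ[F] L →ₗ[F] L}

theorem IsSuperDer.superSymm_assoc_of_mem
    (hbrg : ∀ a b : ZMod 2, ∀ x ∈ g a, ∀ y ∈ g b, br x y ∈ g (a + b))
    (hskew : ∀ a b : ZMod 2, ∀ x ∈ g a, ∀ y ∈ g b, br x y = - sgn F (a * b) • br y x)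
    {pψ : ZMod 2} {ψ : L →ₗ[F] L →ₗ[F] F}
    (h : IsSuperDer F L g br pψ ψ) {a b k : ZMod 2} {x y z : L}
    (hx : x ∈ g a) (hy : y ∈ g b) (hz : z ∈ g k) :
    superSymm g ψ (br x y) z = superSymm g ψ x (br y z) := by
  rw [superSymm_apply_of_mem ψ (hbrg a b x hx y hy) hz,
    superSymm_apply_of_mem ψ hx (hbrg b k y hy z hz), h.apply_bracket hx hy,
    h.apply_bracket hy hz, hskew a k x hx z hz, hskew b a y hy x hx]
  simp only [map_smul, smul_eq_mul]
  rcases ZMod.two_cases a with rfl | rfl <;> rcases ZMod.two_cases b with rfl | rfl <;>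
    rcases ZMod.two_cases k with rfl | rfl <;> simp +decide [sgn] <;> ring

theorem IsSuperDer.superSymm_assoc
    (hbrg : ∀ a b : ZMod 2, ∀ x ∈ g a, ∀ y ∈ g b, br x y ∈ g (a + b))
    (hskew : ∀ a b : ZMod 2, ∀ x ∈ g a, ∀ y ∈ g b, br x y = - sgn F (a * b) • br y x)
    {pψ : ZMod 2} {ψ : L →ₗ[F] L →ₗ[F] F}
    (h : IsSuperDer F L g br pψ ψ) (x y z : L) :
    superSymm g ψ (br x y) z = superSymm g ψ x (br y z) := by
  induction x using DirectSum.Decomposition.inductionOn g with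
  | zero => simp
  | add x x' hx hx' => simp only [map_add, LinearMap.add_apply, hx, hx']
  | homogeneous x =>
    induction y using DirectSum.Decomposition.inductionOn g with
    | zero => simp
    | add y y' hy hy' => simp only [map_add, LinearMap.add_apply, hy, hy']
    | homogeneous y =>
      induction z using DirectSum.Decomposition.inductionOn g with
      | zero => simp
      | add z z' hz hz' => simp only [map_add, hz, hz']
      | homogeneous z => exact h.superSymm_assoc_of_mem hbrg hskew x.2 y.2 z.2

theorem IsSkew.isSuperDer_of_isCocycle
    (hbrg : ∀ a b : ZMod 2, ∀ x ∈ g a, ∀ y ∈ g b, br x y ∈ g (a + b))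
    (hskew : ∀ a b : ZMod 2, ∀ x ∈ g a, ∀ y ∈ g b, br x y = - sgn F (a * b) • br y x)
    {pψ : ZMod 2} {c : L →ₗ[F] L →ₗ[F] F}
    (hc : IsSkew F L g c) (hcoc : IsCocycle F L g br c)
    (hpar : ∀ a : ZMod 2, ∀ x ∈ g a, ∀ y ∈ g (a + pψ + 1), c x y = 0) :
    IsSuperDer F L g br pψ c := by
  refine isSuperDer_iff.mpr ⟨hpar, fun a b x hx y hy z => ?_⟩
  induction z using DirectSum.Decomposition.inductionOn g with
  | zero => simp
  | add z z' hz hz' => simp only [map_add, hz, hz']; ring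
  | homogeneous z => exact hc.apply_bracket_of_isCocycle hbrg hskew hcoc hx hy z.2

end SuperForms

theorem stmt19_general (F : Type*) [Field F]
    (L : Type*) [AddCommGroup L] [Module F L] [Module.Finite F L]
    (g : ZMod 2 → Submodule F L) (br : L →ₗ[F] L →ₗ[F] L)
    (hg : DirectSum.IsInternal g)
    (hbrg : ∀ a b : ZMod 2, ∀ x ∈ g a, ∀ y ∈ g b, br x y ∈ g (a + b))
    (hskew : ∀ a b : ZMod 2, ∀ x ∈ g a, ∀ y ∈ g b,
      br x y = - sgn F (a * b) • br y x)
    (hsimple : ∀ I : Submodule F L, (∀ x y : L, y ∈ I → br x y ∈ I) → I = ⊥ ∨ I = ⊤)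
    (hnoform : ¬ ∃ B : L →ₗ[F] L →ₗ[F] F,
      (∀ x : L, (∀ y : L, B x y = 0) → x = 0) ∧
      (∀ y : L, (∀ x : L, B x y = 0) → y = 0) ∧
      (∀ x y z : L, B (br x y) z = B x (br y z))) :
    (∀ (pψ : ZMod 2) (ψ : L →ₗ[F] Module.Dual F L),
      IsSuperDer F L g br pψ ψ → IsSkew F L g ψ) ∧
    (∀ (pψ : ZMod 2) (ψ : L →ₗ[F] Module.Dual F L),
      IsSuperDer F L g br pψ ψ → IsSkew F L g ψ → IsCocycle F L g br ψ) ∧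
    (∀ (pψ : ZMod 2) (c : L →ₗ[F] Module.Dual F L),
      (∀ a : ZMod 2, ∀ x ∈ g a, ∀ y ∈ g (a + pψ + 1), c x y = 0) →
      IsSkew F L g c → IsCocycle F L g br c →
      IsSuperDer F L g br pψ c) := by
  let _ := hg.chooseDecomposition
  refine ⟨fun pψ ψ hψ => ?_, fun _ _ hψ hskewψ => hψ.isCocycle_of_isSkew hbrg hskew hskewψ,
    fun _ _ hpar hc hcoc => hc.isSuperDer_of_isCocycle hbrg hskew hcoc hpar⟩
  have hassoc := hψ.superSymm_assoc hbrg hskew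
  rcases eq_zero_or_nondegenerate_of_assoc br hsimple hassoc with hzero | hnondeg
  · exact isSkew_of_superSymm_eq_zero hzero
  · exact (hnoform ⟨_, hnondeg.1, hnondeg.2, hassoc⟩).elim

/-- If a finite-dimensional simple Lie superalgebra `L` possesses no
nondegenerate associative form, then every homogeneous superderivation
`ψ : L → L*` is skew; moreover the identification of a superderivation
`ψ : L → L* = L →ₗ (L →ₗ 𝔽)` with the bilinear form `(x, y) ↦ ψ(x)(y)` carries
skew superderivations exactly onto scalar 2-cocycles (and, tautologically,
inner superderivations onto 2-coboundaries), whence `H²(L, 𝔽) ≅ H¹(L, L*)`. -/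
theorem stmt19 (F : Type*) [Field F]
    (L : Type*) [AddCommGroup L] [Module F L] [Module.Finite F L]
    (g : ZMod 2 → Submodule F L) (br : L →ₗ[F] L →ₗ[F] L)
    (hg : DirectSum.IsInternal g)
    (hbrg : ∀ a b : ZMod 2, ∀ x ∈ g a, ∀ y ∈ g b, br x y ∈ g (a + b))
    (hskew : ∀ a b : ZMod 2, ∀ x ∈ g a, ∀ y ∈ g b,
      br x y = - sgn F (a * b) • br y x)
    (hjac : ∀ a b : ZMod 2, ∀ x ∈ g a, ∀ y ∈ g b, ∀ z : L,
      br x (br y z) = br (br x y) z + sgn F (a * b) • br y (br x z))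
    (hsimple : ∀ I : Submodule F L, (∀ x y : L, y ∈ I → br x y ∈ I) → I = ⊥ ∨ I = ⊤)
    (hnonab : br ≠ 0)
    (hnoform : ¬ ∃ B : L →ₗ[F] L →ₗ[F] F,
      (∀ x : L, (∀ y : L, B x y = 0) → x = 0) ∧
      (∀ y : L, (∀ x : L, B x y = 0) → y = 0) ∧
      (∀ x y z : L, B (br x y) z = B x (br y z))) :
    (∀ (pψ : ZMod 2) (ψ : L →ₗ[F] Module.Dual F L),
      IsSuperDer F L g br pψ ψ → IsSkew F L g ψ) ∧
    (∀ (pψ : ZMod 2) (ψ : L →ₗ[F] Module.Dual F L),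
      IsSuperDer F L g br pψ ψ → IsSkew F L g ψ → IsCocycle F L g br ψ) ∧
    (∀ (pψ : ZMod 2) (c : L →ₗ[F] Module.Dual F L),
      (∀ a : ZMod 2, ∀ x ∈ g a, ∀ y ∈ g (a + pψ + 1), c x y = 0) →
      IsSkew F L g c → IsCocycle F L g br c →
      IsSuperDer F L g br pψ c) :=
  stmt19_general F L g br hg hbrg hskew hsimple hnoform
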